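/- arXiv:1803.11340 — 2 statements merged into one kernel-verified Lean document; each statement's English description precedes it below -/
import Mathlib

section
/- In the Texas Chainsaw Josephus game, if n = a(k+1)^b for some integers 1 ≤ a ≤ k and b ≥ 0, then the soldier labeled 0 survives: T(a(k+1)^b, k) = 0. -/
/-- One soldier (the head of the list) is skipped: moved to the back of the circle. -/
def skipOne (s : List (ℕ × ℕ)) : List (ℕ × ℕ) :=
  match s with
  | [] => []
  | p :: rest => rest ++ [p]

/-- The next alive soldier (head) loses one life; removed if dead.
    Does nothing once at most one soldier remains. -/
def hitOne (s : List (ℕ × ℕ)) : List (ℕ × ℕ) :=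
  match s with
  | [] => []
  | [p] => [p]
  | (x, l) :: rest => if l ≤ 1 then rest else rest ++ [(x, l - 1)]

/-- One round: skip one soldier, then hit the next `k` soldiers. -/
def felineRound (k : ℕ) (s : List (ℕ × ℕ)) : List (ℕ × ℕ) :=
  hitOne^[k] (skipOne s)

/-- Run the game with the given fuel, returning the survivor's label. -/
def felineRun (k : ℕ) : ℕ → List (ℕ × ℕ) → ℕ
  | 0, s => (s.headD (0, 0)).1
  | fuel + 1, s =>
    if s.length ≤ 1 then (s.headD (0, 0)).1
    else felineRun k fuel (felineRound k s)

/-- The survivor of the Feline Texas Chainsaw Josephus game with `n` soldiers,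
    parameter `k`, and `ℓ` lives each. -/
def felineT (n k ℓ : ℕ) : ℕ :=
  felineRun k (n * ℓ + 1) ((List.range n).map (fun i => (i, ℓ)))

/-- The survivor of the Texas Chainsaw Josephus game (one life each). -/
def chainsawT (n k : ℕ) : ℕ := felineT n k 1

/-- One-second steps of the one-life game, recording the elimination order.
    `c` is the number of eliminations remaining before the next skip. -/
def elimSteps (k : ℕ) : ℕ → ℕ → List ℕ → List ℕ
  | 0, _, s => s
  | fuel + 1, c, s =>
    match s with
    | [] => []
    | [x] => [x]
    | a :: rest =>
      if c = 0 then elimSteps k fuel k (rest ++ [a])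
      else a :: elimSteps k fuel (c - 1) rest

/-- The order in which soldiers are eliminated (the survivor is listed last). -/
def elimOrder (n k : ℕ) : List ℕ := elimSteps k ((k + 2) * (n + 1) * (n + 1)) 0 (List.range n)

/-- The second at which soldier `x` is eliminated (1-indexed position in the
    elimination order). -/
def elimTime (n k x : ℕ) : ℕ := (elimOrder n k).idxOf x + 1

/-!
Once every soldier has a single life, a round on the circle `x :: l` just turns it into
`l.drop k ++ [x]`. If `n = m (k + 1)`, the first `m` rounds sweep once around the circle,
killing every soldier except the first of each block of `k + 1`; soldier `0` is again at the
front, and `m = a (k + 1) ^ (b - 1)` soldiers are left. After `b` such sweeps at most `k`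
soldiers remain, and the next round leaves soldier `0` alone.
-/

lemma felineRound_nil (k : ℕ) : felineRound k [] = [] :=
  Function.iterate_fixed rfl k

lemma felineRound_singleton (k : ℕ) (p : ℕ × ℕ) : felineRound k [p] = [p] :=
  Function.iterate_fixed rfl k

/-- The fuel of `felineRun` is harmless: once at most one soldier is left, rounds change nothing. -/
lemma felineRun_succ (k f : ℕ) (s : List (ℕ × ℕ)) :
    felineRun k (f + 1) s = felineRun k f (felineRound k s) := by
  match s with
  | [] => cases f <;> simp [felineRun, felineRound_nil]
  | [p] => cases f <;> simp [felineRun, felineRound_singleton]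
  | _ :: _ :: _ => simp [felineRun]

lemma felineRun_eq_iterate (k f : ℕ) (s : List (ℕ × ℕ)) :
    felineRun k f s = (((felineRound k)^[f] s).headD (0, 0)).1 := by
  induction f generalizing s with
  | zero => rfl
  | succ f ih => rw [felineRun_succ, ih, Function.iterate_succ_apply]

lemma hitOne_iterate_append_singleton (j : ℕ) (l : List (ℕ × ℕ)) (q : ℕ × ℕ)
    (hl : ∀ p ∈ l, p.2 ≤ 1) : hitOne^[j] (l ++ [q]) = l.drop j ++ [q] := by
  induction j generalizing l with
  | zero => rfl
  | succ j ih =>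
    match l with
    | [] => exact Function.iterate_fixed rfl (j + 1)
    | (x, c) :: l =>
      have hc : c ≤ 1 := hl (x, c) List.mem_cons_self
      have hx : hitOne ((x, c) :: (l ++ [q])) = l ++ [q] := by
        cases l <;> simp [hitOne, hc]
      rw [Function.iterate_succ_apply, List.cons_append, hx,
        ih l fun p hp => hl p (List.mem_cons_of_mem _ hp)]
      rfl

def chainsawRound {α : Type*} (k : ℕ) (l : List α) : List α :=
  l.drop (k + 1) ++ l.take 1

lemma felineRound_map_one (k : ℕ) (l : List ℕ) :
    felineRound k (l.map (·, 1)) = (chainsawRound k l).map (·, 1) := by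
  cases l with
  | nil => exact felineRound_nil k
  | cons x l =>
    rw [felineRound, List.map_cons, skipOne, hitOne_iterate_append_singleton k _ _ (by simp)]
    simp [chainsawRound, List.map_drop]

lemma felineRound_iterate_map_one (k f : ℕ) (l : List ℕ) :
    (felineRound k)^[f] (l.map (·, 1)) = ((chainsawRound k)^[f] l).map (·, 1) :=
  ((Function.Semiconj.iterate_right (fun l => (felineRound_map_one k l).symm) f).eq l).symm

lemma chainsawT_eq_iterate (n k : ℕ) :
    chainsawT n k = ((chainsawRound k)^[n + 1] (List.range n)).headD 0 := by
  simp only [chainsawT, felineT, felineRun_eq_iterate, felineRound_iterate_map_one, Nat.mul_one]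
  cases (chainsawRound k)^[n + 1] (List.range n) <;> rfl

section chainsawRound

variable {α : Type*} (k : ℕ)

lemma chainsawRound_of_length_le {l : List α} (hl : l.length ≤ k + 1) :
    chainsawRound k l = l.take 1 := by
  simp [chainsawRound, List.drop_eq_nil_of_le hl]

lemma chainsawRound_iterate_of_length_le {l : List α} {f : ℕ} (hl : l.length ≤ k + 1)
    (hf : l.length ≤ f) : (chainsawRound k)^[f] l = l.take 1 := by
  cases f with
  | zero => simp_all
  | succ f =>
    have hfix : chainsawRound k (l.take 1) = l.take 1 := by
      rw [chainsawRound_of_length_le k (by simp), List.take_take, min_self]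
    rw [Function.iterate_succ_apply, chainsawRound_of_length_le k hl,
      Function.iterate_fixed hfix]

/-- `m` rounds on a circle whose first `m (k + 1)` soldiers are `l` kill all of `l` but the
first of each block of `k + 1`, and move the survivors behind the rest `acc` of the circle. -/
lemma exists_chainsawRound_iterate_append : ∀ (m : ℕ) (l acc : List α),
    l.length = m * (k + 1) → ∃ l', l'.length = m ∧ l'.take 1 = l.take 1 ∧
      (chainsawRound k)^[m] (l ++ acc) = acc ++ l'
  | 0, l, acc, hl => by
    obtain rfl : l = [] := List.eq_nil_of_length_eq_zero (by simpa using hl)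
    exact ⟨[], rfl, rfl, by simp⟩
  | m + 1, x :: l, acc, hl => by
    have hl : l.length = m * (k + 1) + k := by
      simp only [List.length_cons, add_mul, one_mul] at hl; omega
    have hround : chainsawRound k (x :: l ++ acc) = l.drop k ++ (acc ++ [x]) := by
      simp [chainsawRound, List.drop_append_of_le_length (show k ≤ l.length by omega)]
    obtain ⟨l', hlen, -, hsweep⟩ :=
      exists_chainsawRound_iterate_append m (l.drop k) (acc ++ [x]) (by simp; omega)
    refine ⟨x :: l', by simp [hlen], rfl, ?_⟩
    rw [Function.iterate_succ_apply, hround, hsweep, List.append_assoc, List.singleton_append]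

lemma chainsawRound_iterate_of_length_eq_mul_pow {a : ℕ} (ha : a ≤ k) :
    ∀ (b : ℕ) (l : List α) (f : ℕ), l.length = a * (k + 1) ^ b → l.length ≤ f →
      (chainsawRound k)^[f] l = l.take 1
  | 0, l, f, hl, hf => chainsawRound_iterate_of_length_le k (by simp at hl; omega) hf
  | b + 1, l, f, hl, hf => by
    set m := a * (k + 1) ^ b
    have hl : l.length = m * (k + 1) := by rw [hl]; ring
    obtain ⟨l', hlen, htake, hsweep⟩ := exists_chainsawRound_iterate_append k m l [] hl
    rw [List.append_nil, List.nil_append] at hsweep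
    have hm : m ≤ m * k := by
      rcases a.eq_zero_or_pos with rfl | ha0
      · simp [m]
      · exact Nat.le_mul_of_pos_right m (by omega)
    obtain ⟨f, rfl⟩ : ∃ f', f = f' + m := ⟨f - m, by rw [hl] at hf; lia⟩
    rw [Function.iterate_add_apply, hsweep,
      chainsawRound_iterate_of_length_eq_mul_pow ha b l' f hlen (by rw [hl] at hf; lia), htake]

end chainsawRound

theorem chainsaw_pure_power_general (a k b : ℕ) (ha2 : a ≤ k) :
    chainsawT (a * (k + 1) ^ b) k = 0 := by
  rw [chainsawT_eq_iterate,
    chainsawRound_iterate_of_length_eq_mul_pow k ha2 b _ _ List.length_range (by simp)]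
  cases a * (k + 1) ^ b <;> simp

/-- If `n = a(k+1)^b` with `1 ≤ a ≤ k`, soldier 0 survives the Texas Chainsaw
Josephus game. -/
theorem chainsaw_pure_power (a k b : ℕ) (hk : 1 ≤ k) (ha1 : 1 ≤ a) (ha2 : a ≤ k) :
    chainsawT (a * (k + 1) ^ b) k = 0 :=
  chainsaw_pure_power_general a k b ha2
end

section
/- The Texas Chainsaw Josephus survivor satisfies the recurrence: for n > k, if T(n-k, k) = x under the relabeling in which soldier k+1 becomes soldier 0 (i.e., labels are shifted cyclically back by k+1 after the first elimination round), then T(n,k) = (x + k + 1) mod n. Equivalently, T(n,k) ≡ T(n-k,k) + k + 1 (mod n) for n > k. -/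
/-!
While every soldier has one life, a round is a rotation by one followed by dropping the first
`k` soldiers. So the first round of the `n`-soldier game leaves the `n - k` soldiers
`k + 1, …, n - 1, 0` in circle order, i.e. the starting circle of the `(n - k)`-soldier game
relabelled by `x ↦ (x + k + 1) % n`, and the game commutes with relabelling. Since each later
round removes at least one soldier, the remaining fuel suffices to finish that smaller game.
-/

def oneLife (xs : List ℕ) : List (ℕ × ℕ) := xs.map (·, 1)

@[simp]
lemma length_oneLife (xs : List ℕ) : (oneLife xs).length = xs.length := List.length_map _

lemma skipOne_oneLife (xs : List ℕ) : skipOne (oneLife xs) = oneLife (xs.rotate 1) := by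
  cases xs <;> simp [skipOne, oneLife]

lemma hitOne_oneLife (xs : List ℕ) :
    hitOne (oneLife xs) = oneLife (xs.drop (min 1 (xs.length - 1))) := by
  match xs with
  | [] | [_] => rfl
  | _ :: _ :: _ => simp [hitOne, oneLife]

lemma hitOne_iterate_oneLife (k : ℕ) (xs : List ℕ) :
    hitOne^[k] (oneLife xs) = oneLife (xs.drop (min k (xs.length - 1))) := by
  induction k with
  | zero => simp
  | succ k ih =>
    rw [Function.iterate_succ_apply', ih, hitOne_oneLife, List.drop_drop, List.length_drop]
    congr 2
    omega

lemma felineRound_oneLife (k : ℕ) (xs : List ℕ) :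
    felineRound k (oneLife xs) = oneLife ((xs.rotate 1).drop (min k (xs.length - 1))) := by
  rw [felineRound, skipOne_oneLife, hitOne_iterate_oneLife, List.length_rotate]

lemma felineRun_oneLife_map (f : ℕ → ℕ) (k : ℕ) :
    ∀ (fuel : ℕ) {xs : List ℕ}, xs ≠ [] →
      felineRun k fuel (oneLife (xs.map f)) = f (felineRun k fuel (oneLife xs)) := by
  intro fuel
  induction fuel with
  | zero =>
    rintro (_ | ⟨x, xs⟩) hxs
    · exact absurd rfl hxs
    · rfl
  | succ fuel ih =>
    rintro (_ | ⟨x, xs⟩) hxs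
    · exact absurd rfl hxs
    by_cases hlen : (x :: xs).length ≤ 1
    · simp only [felineRun, length_oneLife, List.length_map, if_pos hlen]
      rfl
    · simp only [felineRun, length_oneLife, List.length_map, if_neg hlen, felineRound_oneLife,
        ← List.map_rotate, ← List.map_drop]
      apply ih
      simp only [ne_eq, List.drop_eq_nil_iff, List.length_rotate]
      omega

lemma felineRun_oneLife_of_le {k : ℕ} (hk : 1 ≤ k) :
    ∀ (fuel : ℕ) {fuel' : ℕ} {xs : List ℕ}, xs.length ≤ fuel + 1 → fuel ≤ fuel' →
      felineRun k fuel' (oneLife xs) = felineRun k fuel (oneLife xs) := by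
  intro fuel
  induction fuel with
  | zero =>
    rintro (_ | fuel') xs hlen -
    · rfl
    · simp only [felineRun, length_oneLife, if_pos (show xs.length ≤ 1 from hlen)]
  | succ fuel ih =>
    rintro (_ | fuel') xs hlen hfuel
    · omega
    by_cases hone : xs.length ≤ 1
    · simp only [felineRun, length_oneLife, if_pos hone]
    · simp only [felineRun, length_oneLife, if_neg hone, felineRound_oneLife]
      exact ih (by simp; omega) (by omega)

lemma drop_rotate_one_range (n k : ℕ) :
    ((List.range n).rotate 1).drop k = (List.range (n - k)).map fun x => (x + k + 1) % n := by
  apply List.ext_getElem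
  · simp
  · intro i hi _
    simp only [List.getElem_drop, List.getElem_rotate, List.getElem_range, List.length_range,
      List.getElem_map]
    rw [add_comm k i]

lemma chainsawT_eq_felineRun (n k : ℕ) :
    chainsawT n k = felineRun k (n + 1) (oneLife (List.range n)) := by
  rw [chainsawT, felineT, mul_one]
  rfl

/-- The recurrence for the Texas Chainsaw Josephus survivor:
`T(n,k) ≡ T(n-k,k) + k + 1 (mod n)` for `n > k`. -/
theorem chainsaw_recurrence (n k : ℕ) (hk : 1 ≤ k) (h : k < n) :
    chainsawT n k % n = (chainsawT (n - k) k + k + 1) % n := by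
  set relabel : ℕ → ℕ := fun x => (x + k + 1) % n
  have first_round : felineRound k (oneLife (List.range n)) =
      oneLife ((List.range (n - k)).map relabel) := by
    rw [felineRound_oneLife, List.length_range, min_eq_left (by omega), drop_rotate_one_range]
  have survivor : chainsawT n k = relabel (chainsawT (n - k) k) :=
    calc chainsawT n k = felineRun k n (felineRound k (oneLife (List.range n))) := by
          rw [chainsawT_eq_felineRun, felineRun, if_neg (by simp; omega)]
      _ = relabel (felineRun k n (oneLife (List.range (n - k)))) := by
          rw [first_round, felineRun_oneLife_map _ _ _ (by simp; omega)]
      _ = relabel (chainsawT (n - k) k) := by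
          rw [chainsawT_eq_felineRun,
            felineRun_oneLife_of_le hk (n - k + 1) (by simp; omega) (by omega)]
  rw [survivor, Nat.mod_mod]
end
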